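/- arXiv:1803.03728 — 2 statements merged into one kernel-verified Lean document; each statement's English description precedes it below -/
import Mathlib

section
/- A geodesic net in the Euclidean plane with at most two unbalanced vertices has no balanced vertices. -/
/-!
At a vertex `v` maximising a linear functional `⟪w, ·⟫` (with `w ≠ 0`) over the net, pairing the
balancing condition with `w` gives a sum of nonpositive terms equal to zero, so every edge at `v`
is orthogonal to `w`. In the plane these edges lie on one line through `v`, and since no vertex
lies inside an edge, at most one leaves in each direction: `v` is unbalanced. Hence every
line `⟪w, ·⟫ = c` containing all unbalanced vertices contains all vertices, as both the maximum
and the minimum of `⟪w, ·⟫` are attained at unbalanced vertices. At most two unbalanced vertices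
always lie on a line, so every vertex has at most two neighbours.
-/

open scoped Classical

/-- A geodesic net in the Euclidean plane: a finite connected graph embedded in `ℝ²`
whose edges are straight segments between distinct vertices, such that no vertex lies
in the interior of an edge and the interiors of distinct edges are disjoint. -/
structure GeodesicNet where
  verts : Finset (EuclideanSpace ℝ (Fin 2))
  Adj : EuclideanSpace ℝ (Fin 2) → EuclideanSpace ℝ (Fin 2) → Prop
  symm : ∀ u v, Adj u v → Adj v u
  loopless : ∀ v, ¬Adj v v
  mem_of_adj : ∀ u v, Adj u v → u ∈ verts ∧ v ∈ verts
  nonempty : verts.Nonempty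
  connected : ∀ u ∈ verts, ∀ v ∈ verts, Relation.ReflTransGen Adj u v
  no_vertex_inside : ∀ u v, Adj u v → ∀ w ∈ verts, w ∉ openSegment ℝ u v
  edges_disjoint : ∀ u v x y, Adj u v → Adj x y →
    ({u, v} : Set (EuclideanSpace ℝ (Fin 2))) ≠ {x, y} →
    openSegment ℝ u v ∩ openSegment ℝ x y = ∅

namespace GeodesicNet

variable (G : GeodesicNet)

/-- The neighbours of a vertex, as a finset. -/
noncomputable def nbhd (v : EuclideanSpace ℝ (Fin 2)) : Finset (EuclideanSpace ℝ (Fin 2)) :=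
  G.verts.filter fun u => G.Adj v u

/-- The unit vector at `v` pointing towards `u`. -/
noncomputable def dir (_G : GeodesicNet) (v u : EuclideanSpace ℝ (Fin 2)) : EuclideanSpace ℝ (Fin 2) :=
  ‖u - v‖⁻¹ • (u - v)

/-- A vertex is balanced if it has degree at least `3` and the unit vectors along the
incident edges (directed away from the vertex) sum to zero. -/
noncomputable def Balanced (v : EuclideanSpace ℝ (Fin 2)) : Prop :=
  v ∈ G.verts ∧ 3 ≤ (G.nbhd v).card ∧ ∑ u ∈ G.nbhd v, G.dir v u = 0

/-- A vertex is unbalanced if it is a vertex of the net and is not balanced. -/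
noncomputable def Unbalanced (v : EuclideanSpace ℝ (Fin 2)) : Prop :=
  v ∈ G.verts ∧ ¬G.Balanced v

end GeodesicNet

open Module Submodule
open scoped RealInnerProductSpace

local notation "ℝ²" => EuclideanSpace ℝ (Fin 2)

theorem Set.exists_subset_pair_of_ncard_le_two {α : Type*} [Nonempty α] {s : Set α}
    (hs : s.Finite) (h : s.ncard ≤ 2) : ∃ a b, s ⊆ {a, b} := by
  interval_cases hn : s.ncard
  · obtain rfl := (Set.ncard_eq_zero hs).mp hn
    exact ⟨Classical.arbitrary α, Classical.arbitrary α, Set.empty_subset _⟩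
  · obtain ⟨a, rfl⟩ := Set.ncard_eq_one.mp hn
    exact ⟨a, a, by simp⟩
  · obtain ⟨a, b, -, rfl⟩ := Set.ncard_eq_two.mp hn
    exact ⟨a, b, subset_rfl⟩

theorem exists_ne_zero_inner_eq_zero {E : Type*} [NormedAddCommGroup E] [InnerProductSpace ℝ E]
    [FiniteDimensional ℝ E] (hE : 2 ≤ finrank ℝ E) (x : E) : ∃ w ≠ 0, ⟪w, x⟫ = 0 := by
  have hspan : finrank ℝ (ℝ ∙ x) ≤ 1 := by simpa using finrank_span_le_card ({x} : Set E)
  have hperp : 0 < finrank ℝ (ℝ ∙ x)ᗮ := by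
    have := (ℝ ∙ x).finrank_add_finrank_orthogonal
    omega
  obtain ⟨⟨w, hw⟩, hw0⟩ := finrank_pos_iff_exists_ne_zero.mp hperp
  exact ⟨w, by simpa using hw0, mem_orthogonal_singleton_iff_inner_left.mp hw⟩

namespace GeodesicNet

variable (G : GeodesicNet)

theorem mem_nbhd {v u : ℝ²} : u ∈ G.nbhd v ↔ G.Adj v u := by
  simpa [nbhd] using fun h => (G.mem_of_adj v u h).2

theorem mem_verts_of_mem_nbhd {v u : ℝ²} (hu : u ∈ G.nbhd v) : u ∈ G.verts :=
  (G.mem_of_adj v u (G.mem_nbhd.mp hu)).2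

theorem ne_of_mem_nbhd {v u : ℝ²} (hu : u ∈ G.nbhd v) : u ≠ v := by
  rintro rfl
  exact G.loopless u (G.mem_nbhd.mp hu)

theorem eq_of_mem_nbhd_of_eq_smul_add {v d u u' : ℝ²} {t t' : ℝ} (ht : 0 ≤ t) (ht' : 0 ≤ t')
    (hu : u ∈ G.nbhd v) (hu' : u' ∈ G.nbhd v) (hut : u = t • d + v) (hut' : u' = t' • d + v) :
    u = u' := by
  wlog hbtw : Wbtw ℝ v u u' generalizing u u' t t'
  · refine (this ht' ht hu' hu hut' hut ?_).symm
    have := wbtw_or_wbtw_smul_vadd_of_nonneg v d ht ht'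
    simp only [vadd_eq_add, ← hut, ← hut'] at this
    tauto
  by_contra hne
  have hsbtw : Sbtw ℝ v u u' := ⟨hbtw, G.ne_of_mem_nbhd hu, hne⟩
  refine G.no_vertex_inside v u' (G.mem_nbhd.mp hu') u (G.mem_verts_of_mem_nbhd hu) ?_
  rw [openSegment_eq_image_lineMap]
  exact hsbtw.mem_image_Ioo

theorem card_nbhd_le_two_of_sub_mem_span {v d : ℝ²} (h : ∀ u ∈ G.nbhd v, u - v ∈ ℝ ∙ d) :
    (G.nbhd v).card ≤ 2 := by
  choose! t ht using fun u hu => mem_span_singleton.mp (h u hu)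
  have hinj : Set.InjOn (fun u => decide (0 ≤ t u)) (G.nbhd v) := by
    intro u hu u' hu' hsign
    have hu_eq : u = t u • d + v := by rw [ht u hu]; abel
    have hu'_eq : u' = t u' • d + v := by rw [ht u' hu']; abel
    by_cases h0 : 0 ≤ t u
    · have h0' : 0 ≤ t u' := by simpa [h0] using hsign
      exact G.eq_of_mem_nbhd_of_eq_smul_add h0 h0' hu hu' hu_eq hu'_eq
    · have h0' : ¬0 ≤ t u' := by simpa [h0] using hsign
      refine G.eq_of_mem_nbhd_of_eq_smul_add (d := -d) (t := -t u) (t' := -t u')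
        (by linarith) (by linarith) hu hu' ?_ ?_
      · rwa [neg_smul_neg]
      · rwa [neg_smul_neg]
  simpa using Finset.card_le_card_of_injOn _ (fun _ _ => Finset.mem_univ _) hinj

theorem card_nbhd_le_two_of_inner_eq_zero {v w : ℝ²} (hw : w ≠ 0)
    (h : ∀ u ∈ G.nbhd v, ⟪w, u - v⟫ = 0) : (G.nbhd v).card ≤ 2 := by
  have : Fact (finrank ℝ ℝ² = 2) := ⟨by simp⟩
  obtain ⟨d, hd, hdw⟩ := exists_ne_zero_inner_eq_zero (by simp) w
  exact G.card_nbhd_le_two_of_sub_mem_span fun u hu =>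
    mem_span_singleton_of_inner_eq_zero_of_inner_eq_zero hw hd (h u hu)
      (real_inner_comm d w ▸ hdw)

theorem not_balanced_of_forall_inner_le {v w : ℝ²} (hw : w ≠ 0)
    (hmax : ∀ u ∈ G.verts, ⟪w, u⟫ ≤ ⟪w, v⟫) : ¬G.Balanced v := by
  rintro ⟨-, hcard, hsum⟩
  have hterm : ∀ u ∈ G.nbhd v, ‖u - v‖⁻¹ * ⟪w, u - v⟫ ≤ 0 := fun u hu =>
    mul_nonpos_of_nonneg_of_nonpos (by positivity)
      (by rw [inner_sub_right]; linarith [hmax u (G.mem_verts_of_mem_nbhd hu)])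
  have hzero : ∑ u ∈ G.nbhd v, ‖u - v‖⁻¹ * ⟪w, u - v⟫ = 0 := by
    simpa [dir, inner_sum, real_inner_smul_right] using congrArg (⟪w, ·⟫) hsum
  have := G.card_nbhd_le_two_of_inner_eq_zero hw fun u hu =>
    ((mul_eq_zero.mp ((Finset.sum_eq_zero_iff_of_nonpos hterm).mp hzero u hu)).resolve_left
      (inv_ne_zero (norm_ne_zero_iff.mpr (sub_ne_zero.mpr (G.ne_of_mem_nbhd hu)))))
  omega

theorem exists_unbalanced_forall_inner_le {w : ℝ²} (hw : w ≠ 0) :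
    ∃ p, G.Unbalanced p ∧ ∀ u ∈ G.verts, ⟪w, u⟫ ≤ ⟪w, p⟫ := by
  obtain ⟨p, hp, hmax⟩ := G.verts.exists_max_image (⟪w, ·⟫) G.nonempty
  exact ⟨p, ⟨hp, G.not_balanced_of_forall_inner_le hw hmax⟩, hmax⟩

theorem inner_eq_of_forall_unbalanced_inner_eq {w : ℝ²} (hw : w ≠ 0) {c : ℝ}
    (h : ∀ p, G.Unbalanced p → ⟪w, p⟫ = c) {u : ℝ²} (hu : u ∈ G.verts) : ⟪w, u⟫ = c := by
  obtain ⟨p, hp, hpmax⟩ := G.exists_unbalanced_forall_inner_le hw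
  obtain ⟨q, hq, hqmin⟩ := G.exists_unbalanced_forall_inner_le (neg_ne_zero.mpr hw)
  have hle := hpmax u hu
  have hge := hqmin u hu
  simp only [inner_neg_left, neg_le_neg_iff] at hge
  linarith [h p hp, h q hq]

end GeodesicNet

/-- a geodesic net in the Euclidean plane with at most two unbalanced
vertices has no balanced vertices. -/
theorem no_balanced_of_le_two_unbalanced
    (G : GeodesicNet) (h : ({u | G.Unbalanced u} : Set (EuclideanSpace ℝ (Fin 2))).ncard ≤ 2) :
    ∀ v, ¬G.Balanced v := by
  intro v hv
  obtain ⟨p, q, hpq⟩ :=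
    Set.exists_subset_pair_of_ncard_le_two (G.verts.finite_toSet.subset fun u hu => hu.1) h
  obtain ⟨w, hw, hwpq⟩ := exists_ne_zero_inner_eq_zero (E := ℝ²) (by simp) (p - q)
  have hline : ∀ u ∈ G.verts, ⟪w, u⟫ = ⟪w, p⟫ := fun u hu =>
    G.inner_eq_of_forall_unbalanced_inner_eq hw (fun r hr => by
      rcases hpq hr with rfl | rfl
      · rfl
      · rwa [inner_sub_right, sub_eq_zero, eq_comm] at hwpq) hu
  have := G.card_nbhd_le_two_of_inner_eq_zero hw fun u hu => by
    rw [inner_sub_right, hline u (G.mem_verts_of_mem_nbhd hu), hline v hv.1, sub_self]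
  have := hv.2.1
  omega
end

section
/- Let v be a balanced vertex of a geodesic net with incident edges a, b, c occurring consecutively in counterclockwise order. If the turn angle of the path entering along a and leaving along c (the second right turn) is positive, then: the turn angle from a to c lies in (0°, 60°]; the turn angle from a to b lies in (−120°, −60°]; and the turn angle from −b to c lies in (−120°, −60°]. -/
open scoped Classical

instance : Fact (Module.finrank ℝ (EuclideanSpace ℝ (Fin 2)) = 2) :=
  ⟨finrank_euclideanSpace_fin⟩

/-- The standard (counterclockwise) orientation of the Euclidean plane. -/
noncomputable def stdOrient : Orientation ℝ (EuclideanSpace ℝ (Fin 2)) (Fin 2) :=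
  (EuclideanSpace.basisFun (Fin 2) ℝ).toBasis.orientation

/-- The turn angle, in `(-π, π]`, at the vertex `v` of a piecewise geodesic path coming
from `p` and continuing to `q`: the signed angle from the forward extension of the
incoming segment to the outgoing segment (left turns positive); a backtrack counts
as `+π`. -/
noncomputable def turnAngle (p v q : EuclideanSpace ℝ (Fin 2)) : ℝ :=
  (stdOrient.oangle (v - p) (q - v)).toReal

/-- The counterclockwise angle, in `(0, 2π]`, from direction `e` to direction `f`. -/
noncomputable def ccwAngle (e f : EuclideanSpace ℝ (Fin 2)) : ℝ :=
  if (stdOrient.oangle e f).toReal ≤ 0 then (stdOrient.oangle e f).toReal + 2 * Real.pi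
  else (stdOrient.oangle e f).toReal

/-!
Measure angles at `v` counterclockwise from `a`: the edges `b` and `c` point at angles
`0 < β ≤ γ`, the turn from `a` to `c` is `γ - π > 0`, and every other edge points at an angle in
`[γ, 2π]`. By balancing, the unit vectors of the (at least two) edges other than `b` sum to the
opposite of the unit vector of `b`; rotated by `-(β + π)` they lie in an arc of width `2π - γ < π`
and sum to `(1, 0)`. Such a family has a vector at angle `≥ π/3` and, by reflection, one at angle
`≤ -π/3`. This gives `β ≤ 2π/3` and `γ - β ≤ 2π/3`, and with `γ > π` all three bounds.
-/

open Real Finset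

section UnitVectorSums

variable {ι : Type*}

theorem sum_cos_sub (s : Finset ι) (f : ι → ℝ) (a : ℝ) :
    ∑ y ∈ s, cos (f y - a) = (∑ y ∈ s, cos (f y)) * cos a + (∑ y ∈ s, sin (f y)) * sin a := by
  simp only [cos_sub, sum_add_distrib, sum_mul]

theorem sum_sin_sub (s : Finset ι) (f : ι → ℝ) (a : ℝ) :
    ∑ y ∈ s, sin (f y - a) = (∑ y ∈ s, sin (f y)) * cos a - (∑ y ∈ s, cos (f y)) * sin a := by
  simp only [sin_sub, sum_sub_distrib, sum_mul]

theorem cos_sub_add_cos_sub_nonneg {a b t : ℝ} (hab : b - a < π) (hat : a ≤ t) (htb : t ≤ b) :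
    0 ≤ cos (t - a) + cos (t - b) := by
  have h : cos (t - a) + cos (t - b) = 2 * cos (t - (a + b) / 2) * cos ((b - a) / 2) := by
    rw [cos_add_cos]; ring_nf
  rw [h]
  have h₁ : 0 ≤ cos (t - (a + b) / 2) := cos_nonneg_of_mem_Icc ⟨by linarith, by linarith⟩
  have h₂ : 0 ≤ cos ((b - a) / 2) := cos_nonneg_of_mem_Icc ⟨by linarith, by linarith⟩
  positivity

/-- Peel off the two extreme vectors: their sum makes a non-obtuse angle with every vector between
them, so adding it to the inner resultant does not decrease its length. -/
theorem one_le_sq_sum_cos_add_sq_sum_sin_of_odd {s : Finset ι} {f : ι → ℝ} {lo hi : ℝ}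
    (hodd : Odd s.card) (hf : ∀ y ∈ s, f y ∈ Set.Icc lo hi) (hw : hi - lo < π) :
    1 ≤ (∑ y ∈ s, cos (f y)) ^ 2 + (∑ y ∈ s, sin (f y)) ^ 2 := by
  induction hn : s.card using Nat.strong_induction_on generalizing s lo hi with
  | _ n ih =>
  obtain ⟨k, hk⟩ := hodd
  obtain hn1 | hn3 : n = 1 ∨ 3 ≤ n := by omega
  · obtain ⟨a, rfl⟩ := card_eq_one.1 (hn.trans hn1)
    simp
  obtain ⟨a, ha, hmin⟩ := s.exists_min_image f (card_pos.1 (by omega))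
  obtain ⟨b, hb, hmax⟩ := (s.erase a).exists_max_image f
    (card_pos.1 (by rw [card_erase_of_mem ha]; omega))
  set t := (s.erase a).erase b
  have ht : ∀ y ∈ t, f y ∈ Set.Icc (f a) (f b) := fun y hy =>
    ⟨hmin y (mem_of_mem_erase (mem_of_mem_erase hy)), hmax y (mem_of_mem_erase hy)⟩
  have hab : f b - f a < π := by
    linarith [(hf a ha).1, (hf b (mem_of_mem_erase hb)).2]
  have htcard : t.card = n - 2 := by
    rw [card_erase_of_mem hb, card_erase_of_mem ha]; omega
  have hinner := ih (n - 2) (by omega) ⟨k - 1, by omega⟩ ht hab htcard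
  have hsplit (g : ℝ → ℝ) : ∑ y ∈ s, g (f y) = g (f a) + g (f b) + ∑ y ∈ t, g (f y) := by
    rw [← add_sum_erase s _ ha, ← add_sum_erase _ _ hb, add_assoc]
  have hacute : 0 ≤ (∑ y ∈ t, cos (f y)) * (cos (f a) + cos (f b)) +
      (∑ y ∈ t, sin (f y)) * (sin (f a) + sin (f b)) := by
    have h : (∑ y ∈ t, cos (f y)) * (cos (f a) + cos (f b)) +
        (∑ y ∈ t, sin (f y)) * (sin (f a) + sin (f b)) =
        ∑ y ∈ t, (cos (f y - f a) + cos (f y - f b)) := by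
      rw [sum_add_distrib, sum_cos_sub, sum_cos_sub]; ring
    rw [h]
    exact sum_nonneg fun y hy => cos_sub_add_cos_sub_nonneg hab (ht y hy).1 (ht y hy).2
  rw [hsplit cos, hsplit sin]
  nlinarith [sq_nonneg (cos (f a) + cos (f b)), sq_nonneg (sin (f a) + sin (f b))]


/-- If the smallest angle `m` were nonnegative, the components orthogonal to the vector at angle
`m`, all nonnegative, would sum to `-sin m ≤ 0`; so all vectors would be equal, and there would
be only one. -/
theorem exists_neg_of_sum_cos_eq_one {s : Finset ι} {f : ι → ℝ} {lo hi : ℝ}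
    (hcard : 2 ≤ s.card) (hf : ∀ y ∈ s, f y ∈ Set.Icc lo hi) (hw : hi - lo < π) (hhi : hi ≤ π)
    (hc : ∑ y ∈ s, cos (f y) = 1) (hs : ∑ y ∈ s, sin (f y) = 0) : ∃ y ∈ s, f y < 0 := by
  by_contra! hnonneg
  obtain ⟨a, ha, hmin⟩ := s.exists_min_image f (card_pos.1 (by omega))
  have hgap (y) (hy : y ∈ s) : 0 ≤ f y - f a ∧ f y - f a < π :=
    ⟨by linarith [hmin y hy], by linarith [(hf y hy).2, (hf a ha).1]⟩
  have hsum : ∑ y ∈ s, sin (f y - f a) = -sin (f a) := by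
    rw [sum_sin_sub, hc, hs]; ring
  have hsin_a : 0 ≤ sin (f a) :=
    sin_nonneg_of_nonneg_of_le_pi (hnonneg a ha) (by linarith [(hf a ha).2])
  have hterm (y) (hy : y ∈ s) : 0 ≤ sin (f y - f a) :=
    sin_nonneg_of_nonneg_of_le_pi (hgap y hy).1 (hgap y hy).2.le
  have hconst (y) (hy : y ∈ s) : f y = f a := by
    have h0 : sin (f y - f a) = 0 :=
      (sum_eq_zero_iff_of_nonneg hterm).1 (le_antisymm (by linarith) (sum_nonneg hterm)) y hy
    have := (sin_eq_zero_iff_of_lt_of_lt (by linarith [pi_pos, (hgap y hy).1]) (hgap y hy).2).1 h0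
    linarith
  rw [sum_congr rfl fun y hy => by rw [hconst y hy], sum_const, nsmul_eq_mul] at hc hs
  have hcard' : (2 : ℝ) ≤ s.card := by exact_mod_cast hcard
  have hone : (s.card : ℝ) ^ 2 = 1 := by
    linear_combination (-(s.card : ℝ) ^ 2) * sin_sq_add_cos_sq (f a) + (s.card * sin (f a)) * hs +
      (s.card * cos (f a) + 1) * hc
  nlinarith

theorem sq_one_sub_cos_sub_cos_add_sq_sin_add_sin_lt_one {M m : ℝ} (hM : 0 < M) (hm : m < 0)
    (hMm : M - m < π) : (1 - cos M - cos m) ^ 2 + (sin M + sin m) ^ 2 < 1 := by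
  have hexpand : (1 - cos M - cos m) ^ 2 + (sin M + sin m) ^ 2 - 1 =
      2 * (1 - cos M - cos m + cos (M - m)) := by
    rw [cos_sub]
    linear_combination sin_sq_add_cos_sq M + sin_sq_add_cos_sq m
  have hfactor : 1 - cos M - cos m + cos (M - m) =
      4 * sin (M / 2) * sin (m / 2) * cos (M / 2 - m / 2) := by
    obtain ⟨a, rfl⟩ : ∃ a, M = 2 * a := ⟨M / 2, by ring⟩
    obtain ⟨b, rfl⟩ : ∃ b, m = 2 * b := ⟨m / 2, by ring⟩
    rw [show 2 * a - 2 * b = 2 * (a - b) by ring, show 2 * a / 2 = a by ring,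
      show 2 * b / 2 = b by ring, cos_two_mul, cos_two_mul, cos_two_mul, cos_sub]
    linear_combination
      (-2 * (1 - cos b ^ 2)) * sin_sq_add_cos_sq a - 2 * sin a ^ 2 * sin_sq_add_cos_sq b
  have h₁ : 0 < sin (M / 2) := sin_pos_of_pos_of_lt_pi (by linarith) (by linarith)
  have h₂ : sin (m / 2) < 0 := sin_neg_of_neg_of_neg_pi_lt (by linarith) (by linarith)
  have h₃ : 0 < cos (M / 2 - m / 2) := cos_pos_of_mem_Ioo ⟨by linarith, by linarith⟩
  have : sin (M / 2) * sin (m / 2) * cos (M / 2 - m / 2) < 0 :=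
    mul_neg_of_neg_of_pos (mul_neg_of_pos_of_neg h₁ h₂) h₃
  linarith

/-- Parity argument: removing the extreme vector(s) leaves an odd number of vectors, whose
resultant has length at least `1` by `one_le_sq_sum_cos_add_sq_sum_sin_of_odd`; for an even
family this forces the largest angle to be at least `π / 3`, and an odd family is impossible. -/
theorem exists_pi_div_three_le_of_sum_cos_eq_one {s : Finset ι} {f : ι → ℝ} {lo hi : ℝ}
    (hcard : 2 ≤ s.card) (hf : ∀ y ∈ s, f y ∈ Set.Icc lo hi) (hw : hi - lo < π) (hlo : -π ≤ lo)
    (hc : ∑ y ∈ s, cos (f y) = 1) (hs : ∑ y ∈ s, sin (f y) = 0) : ∃ y ∈ s, π / 3 ≤ f y := by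
  by_contra! hlt
  obtain ⟨yM, hyM, hmax⟩ := s.exists_max_image f (card_pos.1 (by omega))
  obtain ⟨ym, hym, hmin⟩ := s.exists_min_image f (card_pos.1 (by omega))
  set M := f yM
  set m := f ym
  have hfm : ∀ y ∈ s, f y ∈ Set.Icc m M := fun y hy => ⟨hmin y hy, hmax y hy⟩
  have hMm : M - m < π := by linarith [(hf yM hyM).2, (hf ym hym).1]
  have hm : m < 0 := by
    obtain ⟨y, hy, hy0⟩ := exists_neg_of_sum_cos_eq_one hcard hfm hMm
      (by linarith [hlt yM hyM, pi_pos]) hc hs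
    linarith [hmin y hy]
  have hM : 0 < M := by
    obtain ⟨y, hy, hy0⟩ := exists_neg_of_sum_cos_eq_one (f := fun y => -f y) hcard
      (fun y hy => ⟨neg_le_neg (hfm y hy).2, neg_le_neg (hfm y hy).1⟩) (by linarith)
      (by linarith [(hf ym hym).1]) (by simpa only [cos_neg] using hc)
      (by simp only [sin_neg, sum_neg_distrib, hs, neg_zero])
    linarith [hmax y hy]
  rcases Nat.even_or_odd s.card with heven | hodd
  · have hrest := one_le_sq_sum_cos_add_sq_sum_sin_of_odd (s := s.erase yM)
      (by rw [card_erase_of_mem hyM]; obtain ⟨k, hk⟩ := heven; exact ⟨k - 1, by omega⟩)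
      (fun y hy => hfm y (mem_of_mem_erase hy)) hMm
    rw [sum_erase_eq_sub hyM, sum_erase_eq_sub hyM, hc, hs] at hrest
    have hcos : 1 / 2 < cos M := by
      rw [← cos_pi_div_three]
      exact cos_lt_cos_of_nonneg_of_le_pi hM.le (by linarith [pi_pos]) (hlt yM hyM)
    nlinarith [sin_sq_add_cos_sq M]
  · have hym' : ym ∈ s.erase yM :=
      mem_erase.2 ⟨fun h => by simp only [m, M, h] at hm hM; linarith, hym⟩
    have hrest := one_le_sq_sum_cos_add_sq_sum_sin_of_odd (s := (s.erase yM).erase ym)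
      (by
        rw [card_erase_of_mem hym', card_erase_of_mem hyM]
        obtain ⟨k, hk⟩ := hodd; exact ⟨k - 1, by omega⟩)
      (fun y hy => hfm y (mem_of_mem_erase (mem_of_mem_erase hy))) hMm
    rw [sum_erase_eq_sub hym', sum_erase_eq_sub hym', sum_erase_eq_sub hyM, sum_erase_eq_sub hyM,
      hc, hs] at hrest
    have := sq_one_sub_cos_sub_cos_add_sq_sin_add_sin_lt_one hM hm hMm
    nlinarith

theorem le_two_pi_div_three_of_sum_exp_add_exp_eq_zero {s : Finset ι} {θ : ι → ℝ} {β γ : ℝ}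
    (hcard : 2 ≤ s.card) (hβ : 0 < β) (hβγ : β ≤ γ) (hγ : π < γ)
    (hθ : ∀ y ∈ s, θ y ∈ Set.Icc γ (2 * π))
    (hsum : ∑ y ∈ s, Complex.exp (θ y * Complex.I) + Complex.exp (β * Complex.I) = 0) :
    β ≤ 2 * π / 3 ∧ γ - β ≤ 2 * π / 3 := by
  have hc : ∑ y ∈ s, cos (θ y) + cos β = 0 := by
    simpa only [Complex.add_re, Complex.re_sum, Complex.exp_ofReal_mul_I_re, Complex.zero_re]
      using congrArg Complex.re hsum
  have hs : ∑ y ∈ s, sin (θ y) + sin β = 0 := by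
    simpa only [Complex.add_im, Complex.im_sum, Complex.exp_ofReal_mul_I_im, Complex.zero_im]
      using congrArg Complex.im hsum
  have hf : ∀ y ∈ s, θ y - (β + π) ∈ Set.Icc (γ - β - π) (π - β) := fun y hy =>
    ⟨by linarith [(hθ y hy).1], by linarith [(hθ y hy).2]⟩
  have hfc : ∑ y ∈ s, cos (θ y - (β + π)) = 1 := by
    rw [sum_cos_sub, cos_add_pi, sin_add_pi]
    linear_combination (-cos β) * hc - sin β * hs + sin_sq_add_cos_sq β
  have hfs : ∑ y ∈ s, sin (θ y - (β + π)) = 0 := by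
    rw [sum_sin_sub, cos_add_pi, sin_add_pi]
    linear_combination (-cos β) * hs + sin β * hc
  constructor
  · obtain ⟨y, hy, h⟩ := exists_pi_div_three_le_of_sum_cos_eq_one hcard hf (by linarith)
      (by linarith) hfc hfs
    linarith [(hf y hy).2]
  · obtain ⟨y, hy, h⟩ := exists_pi_div_three_le_of_sum_cos_eq_one (f := fun y => -(θ y - (β + π)))
      hcard (fun y hy => ⟨neg_le_neg (hf y hy).2, neg_le_neg (hf y hy).1⟩) (by linarith)
      (by linarith) (by simpa only [cos_neg] using hfc)
      (by simp only [sin_neg, sum_neg_distrib, hfs, neg_zero])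
    linarith [(hf y hy).1]

end UnitVectorSums

section CcwAngle

variable {e f g : EuclideanSpace ℝ (Fin 2)}

theorem coe_ccwAngle (e f : EuclideanSpace ℝ (Fin 2)) :
    (ccwAngle e f : Real.Angle) = stdOrient.oangle e f := by
  unfold ccwAngle
  split_ifs <;> simp [Real.Angle.coe_add, Real.Angle.coe_two_pi]

theorem ccwAngle_mem_Ioc (e f : EuclideanSpace ℝ (Fin 2)) : ccwAngle e f ∈ Set.Ioc 0 (2 * π) := by
  have h₁ := Real.Angle.neg_pi_lt_toReal (stdOrient.oangle e f)
  have h₂ := Real.Angle.toReal_le_pi (stdOrient.oangle e f)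
  unfold ccwAngle
  split_ifs with h <;> constructor <;> linarith

theorem ccwAngle_eq_of_coe_eq {t : ℝ} (ht : t ∈ Set.Ioc 0 (2 * π))
    (h : (t : Real.Angle) = stdOrient.oangle e f) : ccwAngle e f = t := by
  have hc := ccwAngle_mem_Ioc e f
  have key := congrArg (fun a : Real.Angle => (a - π).toReal) (h.trans (coe_ccwAngle e f).symm)
  simp only [← Real.Angle.coe_sub] at key
  rw [Real.Angle.toReal_coe_eq_self_iff.2 ⟨by linarith [ht.1], by linarith [ht.2]⟩,
    Real.Angle.toReal_coe_eq_self_iff.2 ⟨by linarith [hc.1], by linarith [hc.2]⟩] at key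
  linarith

theorem ccwAngle_self (e : EuclideanSpace ℝ (Fin 2)) : ccwAngle e e = 2 * π :=
  ccwAngle_eq_of_coe_eq ⟨by positivity, le_rfl⟩ (by simp [Real.Angle.coe_two_pi])

theorem ccwAngle_eq_sub (he : e ≠ 0) (hf : f ≠ 0) (hg : g ≠ 0) (h : ccwAngle e f < ccwAngle e g) :
    ccwAngle f g = ccwAngle e g - ccwAngle e f := by
  refine ccwAngle_eq_of_coe_eq ⟨sub_pos.2 h, ?_⟩ ?_
  · linarith [(ccwAngle_mem_Ioc e g).2, (ccwAngle_mem_Ioc e f).1]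
  · rw [Real.Angle.coe_sub, coe_ccwAngle, coe_ccwAngle, ← stdOrient.oangle_add he hf hg]
    abel

theorem turnAngle_eq_ccwAngle_sub_pi {p v q : EuclideanSpace ℝ (Fin 2)} (hp : p ≠ v) (hq : q ≠ v) :
    turnAngle p v q = ccwAngle (p - v) (q - v) - π := by
  have hc := ccwAngle_mem_Ioc (p - v) (q - v)
  unfold turnAngle
  rw [← neg_sub p v, stdOrient.oangle_neg_left (sub_ne_zero.2 hp) (sub_ne_zero.2 hq),
    ← coe_ccwAngle, ← Real.Angle.neg_coe_pi, ← sub_eq_add_neg, ← Real.Angle.coe_sub,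
    Real.Angle.toReal_coe_eq_self_iff.2 ⟨by linarith [hc.1], by linarith [hc.2]⟩]

theorem exp_ccwAngle_mul_I (he : e ≠ 0) (hf : f ≠ 0) :
    Complex.exp (ccwAngle e f * Complex.I) = stdOrient.kahler (‖e‖⁻¹ • e) (‖f‖⁻¹ • f) := by
  set z := stdOrient.kahler (‖e‖⁻¹ • e) (‖f‖⁻¹ • f)
  have hz : ‖z‖ = 1 := by simp [z, Orientation.norm_kahler, he, hf]
  have harg : (z.arg : Real.Angle) = stdOrient.oangle e f := by
    show stdOrient.oangle (‖e‖⁻¹ • e) (‖f‖⁻¹ • f) = _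
    rw [stdOrient.oangle_smul_left_of_pos _ _ (by positivity),
      stdOrient.oangle_smul_right_of_pos _ _ (by positivity)]
  rw [← Complex.norm_mul_exp_arg_mul_I z, hz, Complex.ofReal_one, one_mul, Complex.exp_mul_I,
    Complex.exp_mul_I, ← Complex.ofReal_cos, ← Complex.ofReal_sin, ← Complex.ofReal_cos,
    ← Complex.ofReal_sin, ← Real.Angle.cos_coe, ← Real.Angle.sin_coe, ← Real.Angle.cos_coe,
    ← Real.Angle.sin_coe, coe_ccwAngle, harg]

end CcwAngle

theorem GeodesicNet.Balanced.sum_exp_ccwAngle_mul_I {G : GeodesicNet} {v : EuclideanSpace ℝ (Fin 2)}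
    (hbal : G.Balanced v) {e : EuclideanSpace ℝ (Fin 2)} (he : e ≠ 0) :
    ∑ y ∈ G.nbhd v, Complex.exp (ccwAngle e (y - v) * Complex.I) = 0 := by
  have hne (y) (hy : y ∈ G.nbhd v) : y - v ≠ 0 :=
    sub_ne_zero.2 fun h => G.loopless v (h ▸ (Finset.mem_filter.1 hy).2)
  calc ∑ y ∈ G.nbhd v, Complex.exp (ccwAngle e (y - v) * Complex.I)
      = ∑ y ∈ G.nbhd v, stdOrient.kahler (‖e‖⁻¹ • e) (G.dir v y) :=
        sum_congr rfl fun y hy => exp_ccwAngle_mul_I he (hne y hy)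
    _ = stdOrient.kahler (‖e‖⁻¹ • e) (∑ y ∈ G.nbhd v, G.dir v y) := (map_sum _ _ _).symm
    _ = 0 := by rw [hbal.2.2, map_zero]

open Real in
theorem second_turn_lemma_general
    (G : GeodesicNet) (v p x q : EuclideanSpace ℝ (Fin 2))
    (hvp : G.Adj v p) (hvx : G.Adj v x) (hvq : G.Adj v q)
    (hpq : q ≠ p)
    (hbal : G.Balanced v)
    (hfirst : ∀ y, G.Adj v y → y ≠ p →
      ccwAngle (p - v) (x - v) ≤ ccwAngle (p - v) (y - v))
    (hsecond : ∀ y, G.Adj v y → y ≠ p → y ≠ x →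
      ccwAngle (p - v) (q - v) ≤ ccwAngle (p - v) (y - v))
    (hpos : 0 < turnAngle p v q) :
    turnAngle p v q ∈ Set.Ioc 0 (π / 3) ∧
    turnAngle p v x ∈ Set.Ioc (-(2 * π / 3)) (-(π / 3)) ∧
    turnAngle x v q ∈ Set.Ioc (-(2 * π / 3)) (-(π / 3)) := by
  have hne (y) (hy : G.Adj v y) : y ≠ v := fun h => G.loopless v (h ▸ hy)
  have hx : x ∈ G.nbhd v := Finset.mem_filter.2 ⟨(G.mem_of_adj v x hvx).2, hvx⟩
  have hsum := hbal.sum_exp_ccwAngle_mul_I (sub_ne_zero.2 (hne p hvp))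
  rw [← add_sum_erase _ _ hx, add_comm] at hsum
  have hrest : ∀ y ∈ (G.nbhd v).erase x,
      ccwAngle (p - v) (y - v) ∈ Set.Icc (ccwAngle (p - v) (q - v)) (2 * π) := by
    intro y hy
    obtain ⟨hyx, hy⟩ := mem_erase.1 hy
    refine ⟨?_, (ccwAngle_mem_Ioc _ _).2⟩
    by_cases hyp : y = p
    · rw [hyp, ccwAngle_self]
      exact (ccwAngle_mem_Ioc _ _).2
    · exact hsecond y (Finset.mem_filter.1 hy).2 hyp hyx
  rw [turnAngle_eq_ccwAngle_sub_pi (hne p hvp) (hne q hvq)] at hpos ⊢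
  obtain ⟨hβ, hγβ⟩ := le_two_pi_div_three_of_sum_exp_add_exp_eq_zero
    (by rw [card_erase_of_mem hx]; have := hbal.2.1; omega) (ccwAngle_mem_Ioc _ _).1
    (hfirst q hvq hpq) (by linarith) hrest hsum
  rw [turnAngle_eq_ccwAngle_sub_pi (hne p hvp) (hne x hvx),
    turnAngle_eq_ccwAngle_sub_pi (hne x hvx) (hne q hvq),
    ccwAngle_eq_sub (sub_ne_zero.2 (hne p hvp)) (sub_ne_zero.2 (hne x hvx))
      (sub_ne_zero.2 (hne q hvq)) (by linarith)]
  refine ⟨⟨?_, ?_⟩, ⟨?_, ?_⟩, ⟨?_, ?_⟩⟩ <;> linarith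

open Real in
/-- Second Turn Lemma: let `v` be a balanced vertex of a geodesic net with
incident edges `a = vp`, `b = vx`, `c = vq` occurring consecutively in counterclockwise
order (`b` immediately follows `a`, and `c` immediately follows `b`).  If the turn angle
of the path entering along `a` and leaving along `c` (the second right turn) is
positive, then: the turn angle from `a` to `c` lies in `(0°, 60°]`; the turn angle from
`a` to `b` lies in `(-120°, -60°]`; and the turn angle from `-b` to `c` (entering along
`b` from `x` and leaving along `c`) lies in `(-120°, -60°]`. -/
theorem second_turn_lemma
    (G : GeodesicNet) (v p x q : EuclideanSpace ℝ (Fin 2))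
    (hvp : G.Adj v p) (hvx : G.Adj v x) (hvq : G.Adj v q)
    (hpx : x ≠ p) (hxq : q ≠ x) (hpq : q ≠ p)
    (hbal : G.Balanced v)
    (hfirst : ∀ y, G.Adj v y → y ≠ p →
      ccwAngle (p - v) (x - v) ≤ ccwAngle (p - v) (y - v))
    (hsecond : ∀ y, G.Adj v y → y ≠ p → y ≠ x →
      ccwAngle (p - v) (q - v) ≤ ccwAngle (p - v) (y - v))
    (hpos : 0 < turnAngle p v q) :
    turnAngle p v q ∈ Set.Ioc 0 (π / 3) ∧
    turnAngle p v x ∈ Set.Ioc (-(2 * π / 3)) (-(π / 3)) ∧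
    turnAngle x v q ∈ Set.Ioc (-(2 * π / 3)) (-(π / 3)) :=
  second_turn_lemma_general G v p x q hvp hvx hvq hpq hbal hfirst hsecond hpos
end
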